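/- arXiv:1011.6181 — 5 statements merged into one kernel-verified Lean document; each statement's English description precedes it below -/
import Mathlib

section
/- Let k be a positive integer, let A be an ℓ×m matrix and B an m×n matrix over ℤ ∪ {+∞}, and let A′ and B′ be obtained from A and B by replacing each finite entry a by ⌈a/k⌉ (and keeping +∞ entries as +∞). Then for all indices u, v: (A⋆B)[u,v] ≤ k·(A′⋆B′)[u,v] ≤ (A⋆B)[u,v] + 2k, where k·(+∞) = +∞ and +∞ + 2k = +∞. -/
/-- The distance (min-plus) product of two matrices with entries in `ℤ ∪ {+∞}`. -/
noncomputable def mpMul {I K J : Type*} [Fintype K]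
    (A : Matrix I K (WithTop ℤ)) (B : Matrix K J (WithTop ℤ)) : Matrix I J (WithTop ℤ) :=
  fun i j => Finset.univ.inf fun k => A i k + B k j

lemma ceil_bounds (k a : ℤ) (hk : 0 < k) :
    a ≤ k * ⌈(a : ℚ) / (k : ℚ)⌉ ∧ k * ⌈(a : ℚ) / (k : ℚ)⌉ ≤ a + k := by
  have hkq : (0:ℚ) < (k:ℚ) := by exact_mod_cast hk
  set c := ⌈(a : ℚ) / (k : ℚ)⌉ with hc
  have h1 : (a:ℚ) / (k:ℚ) ≤ (c:ℚ) := Int.le_ceil _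
  have h2 : (c:ℚ) < (a:ℚ) / (k:ℚ) + 1 := Int.ceil_lt_add_one _
  constructor
  · have : (a:ℚ) ≤ (k:ℚ) * (c:ℚ) := by
      rw [div_le_iff₀ hkq] at h1; linarith [h1]
    exact_mod_cast this
  · have hdiv : (a:ℚ)/(k:ℚ) * (k:ℚ) = (a:ℚ) := div_mul_cancel₀ _ hkq.ne'
    have : (k:ℚ) * (c:ℚ) ≤ (a:ℚ) + (k:ℚ) := by nlinarith [h2, hdiv]
    exact_mod_cast this

/-- If `A'`, `B'` are obtained from `A`, `B` by replacing each finite entry `a` by `⌈a/k⌉`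
(keeping `+∞` entries as `+∞`), then for all indices `u`, `v`:
`(A⋆B)[u,v] ≤ k·(A'⋆B')[u,v] ≤ (A⋆B)[u,v] + 2k`. -/
theorem minplus_scaling {I K J : Type*} [Fintype K]
    (k : ℤ) (hk : 0 < k)
    (A : Matrix I K (WithTop ℤ)) (B : Matrix K J (WithTop ℤ))
    (A' : Matrix I K (WithTop ℤ)) (B' : Matrix K J (WithTop ℤ))
    (hA : ∀ i p, A' i p = (A i p).map (fun a : ℤ => ⌈(a : ℚ) / (k : ℚ)⌉))
    (hB : ∀ p j, B' p j = (B p j).map (fun a : ℤ => ⌈(a : ℚ) / (k : ℚ)⌉))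
    (u : I) (v : J) :
    mpMul A B u v ≤ (k : WithTop ℤ) * mpMul A' B' u v ∧
    (k : WithTop ℤ) * mpMul A' B' u v ≤ mpMul A B u v + ((2 * k : ℤ) : WithTop ℤ) := by
  have hk0 : ((k:ℤ) : WithTop ℤ) ≠ 0 := by exact_mod_cast hk.ne'
  constructor
  · -- first inequality
    rcases eq_or_ne (mpMul A' B' u v) ⊤ with h | h
    · rw [h, WithTop.mul_top hk0]; exact le_top
    · have hne : (Finset.univ : Finset K).Nonempty := by
        by_contra hne
        rw [Finset.not_nonempty_iff_eq_empty] at hne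
        exact h (by simp [mpMul, hne])
      obtain ⟨p, -, hp⟩ := Finset.exists_mem_eq_inf Finset.univ hne
        (fun p => A' u p + B' p v)
      have hp' : mpMul A' B' u v = A' u p + B' p v := hp
      rw [hp'] at h ⊢
      have hA'ne : A' u p ≠ ⊤ := fun ht => h (by simp [ht])
      have hB'ne : B' p v ≠ ⊤ := fun ht => h (by simp [ht])
      have hAne : A u p ≠ ⊤ := by
        intro ht; apply hA'ne; rw [hA, ht]; rfl
      have hBne : B p v ≠ ⊤ := by
        intro ht; apply hB'ne; rw [hB, ht]; rfl
      obtain ⟨a, ha0⟩ := Option.ne_none_iff_exists'.mp hAne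
      obtain ⟨b, hb0⟩ := Option.ne_none_iff_exists'.mp hBne
      have ha : A u p = ((a:ℤ) : WithTop ℤ) := ha0
      have hb : B p v = ((b:ℤ) : WithTop ℤ) := hb0
      have hA' : A' u p = ((⌈(a : ℚ) / (k : ℚ)⌉ : ℤ) : WithTop ℤ) := by
        rw [hA, ha]; rfl
      have hB' : B' p v = ((⌈(b : ℚ) / (k : ℚ)⌉ : ℤ) : WithTop ℤ) := by
        rw [hB, hb]; rfl
      calc mpMul A B u v ≤ A u p + B p v := Finset.inf_le (Finset.mem_univ p)
        _ ≤ (k : WithTop ℤ) * (A' u p + B' p v) := by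
          rw [ha, hb, hA', hB']
          rw [← WithTop.coe_add, ← WithTop.coe_add, ← WithTop.coe_mul, WithTop.coe_le_coe]
          have h1 := (ceil_bounds k a hk).1
          have h2 := (ceil_bounds k b hk).1
          nlinarith
  · -- second inequality
    rcases eq_or_ne (mpMul A B u v) ⊤ with h | h
    · rw [h, top_add]; exact le_top
    · have hne : (Finset.univ : Finset K).Nonempty := by
        by_contra hne
        rw [Finset.not_nonempty_iff_eq_empty] at hne
        exact h (by simp [mpMul, hne])
      obtain ⟨p, -, hp⟩ := Finset.exists_mem_eq_inf Finset.univ hne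
        (fun p => A u p + B p v)
      have hp' : mpMul A B u v = A u p + B p v := hp
      rw [hp'] at h ⊢
      have hAne : A u p ≠ ⊤ := fun ht => h (by simp [ht])
      have hBne : B p v ≠ ⊤ := fun ht => h (by simp [ht])
      obtain ⟨a, ha0⟩ := Option.ne_none_iff_exists'.mp hAne
      obtain ⟨b, hb0⟩ := Option.ne_none_iff_exists'.mp hBne
      have ha : A u p = ((a:ℤ) : WithTop ℤ) := ha0
      have hb : B p v = ((b:ℤ) : WithTop ℤ) := hb0
      set ca := ⌈(a : ℚ) / (k : ℚ)⌉ with hca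
      set cb := ⌈(b : ℚ) / (k : ℚ)⌉ with hcb
      have hA' : A' u p = ((ca : ℤ) : WithTop ℤ) := by rw [hA, ha]; rfl
      have hB' : B' p v = ((cb : ℤ) : WithTop ℤ) := by rw [hB, hb]; rfl
      have hinf : mpMul A' B' u v ≤ ((ca + cb : ℤ) : WithTop ℤ) := by
        calc mpMul A' B' u v ≤ A' u p + B' p v := Finset.inf_le (Finset.mem_univ p)
          _ = ((ca + cb : ℤ) : WithTop ℤ) := by rw [hA', hB', WithTop.coe_add]
      obtain ⟨d, hd, hdle⟩ := WithTop.le_coe_iff.mp hinf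
      rw [hd, ha, hb, ← WithTop.coe_mul, ← WithTop.coe_add, ← WithTop.coe_add,
        WithTop.coe_le_coe]
      have h1 := (ceil_bounds k a hk).2
      have h2 := (ceil_bounds k b hk).2
      have : k * d ≤ k * (ca + cb) := by nlinarith
      nlinarith
end

section
/- Let P be an n×n matrix over ℤ ∪ {+∞} and let a ≤ b be integers. Define the n×n matrix S by S[u,v] = P[u,v] − a if a ≤ P[u,v] ≤ b, and S[u,v] = +∞ otherwise. Suppose that for a pair of indices (u,v) there exists an index x₀ with (P⋆P)[u,v] = P[u,x₀] + P[x₀,v] and with a ≤ P[u,x₀] ≤ b and a ≤ P[x₀,v] ≤ b. Then (S⋆S)[u,v] + 2a = (P⋆P)[u,v]. -/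
/-- Let `S` be obtained from `P` by keeping only the entries lying in `[a,b]` and decreasing
them by `a` (all other entries become `+∞`).  If for a pair `(u,v)` the min-plus square
`(P⋆P)[u,v]` is attained through an index `x₀` with both `P[u,x₀]` and `P[x₀,v]` in `[a,b]`,
then `(S⋆S)[u,v] + 2a = (P⋆P)[u,v]`. -/
theorem minplus_truncate_shift {V : Type*} [Fintype V]
    (P S : Matrix V V (WithTop ℤ)) (a b : ℤ) (hab : a ≤ b)
    (hS1 : ∀ (u v : V) (p : ℤ), P u v = (p : WithTop ℤ) → a ≤ p → p ≤ b →
      S u v = ((p - a : ℤ) : WithTop ℤ))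
    (hS2 : ∀ u v : V, (¬ ∃ p : ℤ, P u v = (p : WithTop ℤ) ∧ a ≤ p ∧ p ≤ b) → S u v = ⊤)
    (u v : V)
    (hx : ∃ x₀ : V, mpMul P P u v = P u x₀ + P x₀ v ∧
      ∃ p q : ℤ, P u x₀ = (p : WithTop ℤ) ∧ a ≤ p ∧ p ≤ b ∧
        P x₀ v = (q : WithTop ℤ) ∧ a ≤ q ∧ q ≤ b) :
    mpMul S S u v + ((2 * a : ℤ) : WithTop ℤ) = mpMul P P u v := by
  obtain ⟨x₀, hmp, p, q, hPux, hap, hpb, hPxv, haq, hqb⟩ := hx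
  have hSux := hS1 u x₀ p hPux hap hpb
  have hSxv := hS1 x₀ v q hPxv haq hqb
  have hle : mpMul S S u v ≤ ((p - a + (q - a) : ℤ) : WithTop ℤ) := by
    have := Finset.inf_le (f := fun k => S u k + S k v) (Finset.mem_univ x₀)
    simpa only [mpMul, hSux, hSxv, ← WithTop.coe_add] using this
  have hge : ((p - a + (q - a) : ℤ) : WithTop ℤ) ≤ mpMul S S u v := by
    apply Finset.le_inf
    intro k _
    by_cases h1 : ∃ p' : ℤ, P u k = (p' : WithTop ℤ) ∧ a ≤ p' ∧ p' ≤ b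
    · obtain ⟨p', hP1, ha1, hb1⟩ := h1
      by_cases h2 : ∃ q' : ℤ, P k v = (q' : WithTop ℤ) ∧ a ≤ q' ∧ q' ≤ b
      · obtain ⟨q', hP2, ha2, hb2⟩ := h2
        have hS1' := hS1 u k p' hP1 ha1 hb1
        have hS2' := hS1 k v q' hP2 ha2 hb2
        have hmin : mpMul P P u v ≤ P u k + P k v :=
          Finset.inf_le (f := fun k => P u k + P k v) (Finset.mem_univ k)
        rw [hmp, hPux, hPxv, hP1, hP2, ← WithTop.coe_add, ← WithTop.coe_add] at hmin
        have hpq : p + q ≤ p' + q' := by exact_mod_cast hmin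
        rw [hS1', hS2', ← WithTop.coe_add, WithTop.coe_le_coe]
        linarith
      · rw [hS2 k v h2]; simp
    · rw [hS2 u k h1]; simp
  have heq : mpMul S S u v = ((p - a + (q - a) : ℤ) : WithTop ℤ) := le_antisymm hle hge
  rw [heq, hmp, hPux, hPxv, ← WithTop.coe_add, ← WithTop.coe_add, WithTop.coe_eq_coe]
  ring
end

section
/- Let M be a positive integer and, for nonnegative integers k, define F(k,M) ⊆ ℕ recursively by F(k,M) = {0,…,k} if k ≤ M+1, and F(k,M) = {k} ∪ ⋃_{i=⌊(k−M)/2⌋}^{⌈(k+M)/2⌉} F(i,M) if k > M+1. Then: (a) for all nonnegative integers d and k, if k ∈ F(d,M) then F(k,M) ⊆ F(d,M); and (b) for every k > M+1 and every integer i with ⌊(k−M)/2⌋ ≤ i ≤ ⌈(k+M)/2⌉, both i ∈ F(k,M) and k − i ∈ F(k,M). -/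
/-- `F k M`: `{0,…,k}` if `k ≤ M+1`, and
`{k} ∪ ⋃_{i=⌊(k−M)/2⌋}^{⌈(k+M)/2⌉} F i M` if `k > M+1`. -/
def F (M : ℕ) (k : ℕ) : Finset ℕ :=
  if k ≤ M + 1 then Finset.range (k + 1)
  else {k} ∪ (Finset.Icc ((k - M) / 2) ((k + M + 1) / 2)).attach.biUnion
      (fun i => F M i.1)
termination_by k
decreasing_by
  have h2 := i.2
  simp only [Finset.mem_Icc] at h2
  omega

lemma F_eq_le {M k : ℕ} (h : k ≤ M + 1) : F M k = Finset.range (k + 1) := by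
  rw [F, if_pos h]

lemma F_mem_gt {M k : ℕ} (h : ¬ k ≤ M + 1) (x : ℕ) :
    x ∈ F M k ↔ x = k ∨ ∃ i, ((k - M) / 2 ≤ i ∧ i ≤ (k + M + 1) / 2) ∧ x ∈ F M i := by
  rw [F, if_neg h]
  simp [Finset.mem_union, Finset.mem_biUnion, Finset.mem_Icc]

lemma F_self (M k : ℕ) : k ∈ F M k := by
  by_cases h : k ≤ M + 1
  · rw [F_eq_le h]; simp
  · rw [F_mem_gt h]; left; rfl

lemma F_sub (M : ℕ) : ∀ d k : ℕ, k ∈ F M d → F M k ⊆ F M d := by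
  intro d
  induction d using Nat.strong_induction_on with
  | _ d ih =>
    intro k hk
    by_cases hd : d ≤ M + 1
    · rw [F_eq_le hd] at hk
      rw [Finset.mem_range] at hk
      rw [F_eq_le (by omega), F_eq_le hd]
      exact Finset.range_subset_range.mpr (by omega)
    · rw [F_mem_gt hd] at hk
      rcases hk with rfl | ⟨i, ⟨hi1, hi2⟩, hki⟩
      · exact subset_rfl
      · have hid : i < d := by omega
        intro x hx
        have hxi : x ∈ F M i := ih i hid k hki hx
        rw [F_mem_gt hd]
        right
        exact ⟨i, ⟨hi1, hi2⟩, hxi⟩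

/-- (a) If `k ∈ F(d,M)` then `F(k,M) ⊆ F(d,M)`; and (b) for `k > M+1` and
`⌊(k−M)/2⌋ ≤ i ≤ ⌈(k+M)/2⌉`, both `i ∈ F(k,M)` and `k − i ∈ F(k,M)`. -/
theorem F_closure (M : ℕ) (hM : 0 < M) :
    (∀ d k : ℕ, k ∈ F M d → F M k ⊆ F M d) ∧
    (∀ k : ℕ, M + 1 < k → ∀ i : ℕ, (k - M) / 2 ≤ i → i ≤ (k + M + 1) / 2 →
      i ∈ F M k ∧ k - i ∈ F M k) := by
  refine ⟨F_sub M, ?_⟩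
  intro k hk i h1 h2
  have hk' : ¬ k ≤ M + 1 := by omega
  constructor
  · rw [F_mem_gt hk']
    exact Or.inr ⟨i, ⟨h1, h2⟩, F_self M i⟩
  · rw [F_mem_gt hk']
    exact Or.inr ⟨k - i, ⟨by omega, by omega⟩, F_self M (k - i)⟩
end

section
/- Let M be a positive integer and k a nonnegative integer. Then every element m ∈ F(k,M) satisfies, for some natural number j, the inequalities k/2^j − (M+1) ≤ m ≤ k/2^j + (M+1) (as real numbers). -/
lemma F_aux (M : ℕ) : ∀ k, ∀ m ∈ F M k,
    ∃ j : ℕ, |(m : ℝ) - (k : ℝ) / 2 ^ j| ≤ (M + 1) * (1 - (1/2 : ℝ) ^ j) := by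
  intro k
  induction k using Nat.strong_induction_on with
  | _ k ih =>
    intro m hm
    rw [F] at hm
    split_ifs at hm with h
    · refine ⟨1, ?_⟩
      have hmk : m ≤ k := Nat.lt_succ_iff.mp (Finset.mem_range.mp hm)
      have h1 : (m : ℝ) ≤ k := by exact_mod_cast hmk
      have h2 : (k : ℝ) ≤ M + 1 := by exact_mod_cast h
      have h3 : (0 : ℝ) ≤ m := Nat.cast_nonneg m
      rw [abs_le]
      constructor <;> [skip; skip] <;> norm_num <;> nlinarith
    · rw [Finset.mem_union] at hm
      rcases hm with hm | hm
      · refine ⟨0, ?_⟩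
        simp_all
      · rw [Finset.mem_biUnion] at hm
        obtain ⟨⟨i, hi⟩, -, hmi⟩ := hm
        rw [Finset.mem_Icc] at hi
        obtain ⟨j, hj⟩ := ih i (by omega) m hmi
        refine ⟨j + 1, ?_⟩
        have hA : (0 : ℝ) < 2 ^ j := by positivity
        have hk1 : (k : ℝ) ≤ 2 * i + M + 1 := by
          have : k ≤ 2 * i + M + 1 := by omega
          exact_mod_cast this
        have hk2 : 2 * (i : ℝ) ≤ k + M + 1 := by
          have : 2 * i ≤ k + M + 1 := by omega
          exact_mod_cast this
        have key : |(i : ℝ) / 2 ^ j - (k : ℝ) / 2 ^ (j + 1)| ≤ (M + 1) / 2 ^ (j + 1) := by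
          have h2A : (0:ℝ) < 2 ^ j * 2 := by positivity
          rw [abs_le, pow_succ]
          constructor
          · rw [neg_le_sub_iff_le_add, div_add_div _ _ (ne_of_gt hA) (ne_of_gt h2A),
              div_le_div_iff₀ h2A (by positivity)]
            nlinarith [mul_le_mul_of_nonneg_right hk1 (le_of_lt (mul_pos hA hA))]
          · rw [sub_le_iff_le_add, div_add_div _ _ (ne_of_gt h2A) (ne_of_gt h2A),
              div_le_div_iff₀ hA (by positivity)]
            nlinarith [mul_le_mul_of_nonneg_right hk2 (le_of_lt (mul_pos hA hA))]
        calc |(m : ℝ) - (k : ℝ) / 2 ^ (j + 1)|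
            ≤ |(m : ℝ) - (i : ℝ) / 2 ^ j| + |(i : ℝ) / 2 ^ j - (k : ℝ) / 2 ^ (j + 1)| :=
              abs_sub_le _ _ _
          _ ≤ (M + 1) * (1 - (1/2 : ℝ) ^ j) + (M + 1) / 2 ^ (j + 1) := add_le_add hj key
          _ = (M + 1) * (1 - (1/2 : ℝ) ^ (j + 1)) := by
              rw [div_pow, one_pow, div_pow, one_pow]
              field_simp
              ring


/-- Every element `m ∈ F(k,M)` satisfies, for some natural number `j`,
`k/2^j − (M+1) ≤ m ≤ k/2^j + (M+1)` as real numbers. -/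
theorem F_mem_near_halving (M : ℕ) (hM : 0 < M) (k m : ℕ) (hm : m ∈ F M k) :
    ∃ j : ℕ, (k : ℝ) / 2 ^ j - (M + 1) ≤ (m : ℝ) ∧ (m : ℝ) ≤ (k : ℝ) / 2 ^ j + (M + 1) := by
  obtain ⟨j, hj⟩ := F_aux M k m hm
  rw [abs_le] at hj
  have hp : (0 : ℝ) ≤ (1/2 : ℝ) ^ j := by positivity
  have hM1 : (0 : ℝ) ≤ (M : ℝ) + 1 := by positivity
  exact ⟨j, by constructor <;> nlinarith [hj.1, hj.2]⟩
end

section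
/- There exists a constant C > 0 such that for every positive integer M and every integer k ≥ 2, the cardinality of F(k,M) satisfies |F(k,M)| ≤ C · M · log k. -/
lemma F_small (M i : ℕ) (h : i ≤ M + 1) : F M i = Finset.range (i + 1) := by
  rw [F, if_pos h]

lemma F_big (M i : ℕ) (h : ¬ i ≤ M + 1) :
    F M i = {i} ∪ (Finset.Icc ((i - M) / 2) ((i + M + 1) / 2)).attach.biUnion
      (fun j => F M j.1) := by
  rw [F, if_neg h]

lemma F_key (M : ℕ) : ∀ D a b : ℕ, a ≤ b → b ≤ a + (2*M+3) → b < M + 1 + 2^D →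
    ((Finset.range (M+2)) ∪ (Finset.Icc a b).biUnion (F M)).card
      ≤ (M+2) + (2*M+4) * D := by
  intro D
  induction D with
  | zero =>
    intro a b hab hw hb
    simp only [pow_zero] at hb
    have hsub : (Finset.range (M+2)) ∪ (Finset.Icc a b).biUnion (F M)
        ⊆ Finset.range (M+2) := by
      intro x hx
      simp only [Finset.mem_union, Finset.mem_biUnion, Finset.mem_Icc] at hx
      rcases hx with hx | ⟨i, ⟨_, hib⟩, hxi⟩
      · exact hx
      · rw [F_small M i (by omega)] at hxi
        simp only [Finset.mem_range] at hxi ⊢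
        omega
    calc _ ≤ (Finset.range (M+2)).card := Finset.card_le_card hsub
    _ = M + 2 := Finset.card_range _
    _ ≤ _ := by omega
  | succ D ih =>
    intro a b hab hw hb
    by_cases hbM : b ≤ M + 1
    · have hsub : (Finset.range (M+2)) ∪ (Finset.Icc a b).biUnion (F M)
          ⊆ Finset.range (M+2) := by
        intro x hx
        simp only [Finset.mem_union, Finset.mem_biUnion, Finset.mem_Icc] at hx
        rcases hx with hx | ⟨i, ⟨_, hib⟩, hxi⟩
        · exact hx
        · rw [F_small M i (by omega)] at hxi
          simp only [Finset.mem_range] at hxi ⊢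
          omega
      calc _ ≤ (Finset.range (M+2)).card := Finset.card_le_card hsub
      _ = M + 2 := Finset.card_range _
      _ ≤ _ := by nlinarith
    · -- b ≥ M+2
      set a' := (a - M) / 2 with ha'
      set b' := (b + M + 1) / 2 with hb'
      have hsub : (Finset.range (M+2)) ∪ (Finset.Icc a b).biUnion (F M)
          ⊆ Finset.Icc a b ∪ ((Finset.range (M+2)) ∪ (Finset.Icc a' b').biUnion (F M)) := by
        intro x hx
        simp only [Finset.mem_union, Finset.mem_biUnion, Finset.mem_Icc] at hx ⊢
        rcases hx with hx | ⟨i, ⟨hai, hib⟩, hxi⟩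
        · exact Or.inr (Or.inl hx)
        · by_cases hiM : i ≤ M + 1
          · rw [F_small M i hiM] at hxi
            simp only [Finset.mem_range] at hxi
            exact Or.inr (Or.inl (Finset.mem_range.mpr (by omega)))
          · rw [F_big M i hiM] at hxi
            simp only [Finset.mem_union, Finset.mem_singleton, Finset.mem_biUnion,
              Finset.mem_attach, true_and, Subtype.exists] at hxi
            rcases hxi with rfl | ⟨j, hj, hxj⟩
            · exact Or.inl ⟨hai, hib⟩
            · simp only [Finset.mem_Icc] at hj
              refine Or.inr (Or.inr ⟨j, ⟨?_, ?_⟩, hxj⟩) <;> omega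
      have h2pow : (2:ℕ)^(D+1) = 2 * 2^D := by ring
      have hIH := ih a' b' (by omega) (by omega) (by omega)
      calc ((Finset.range (M+2)) ∪ (Finset.Icc a b).biUnion (F M)).card
          ≤ (Finset.Icc a b ∪ ((Finset.range (M+2)) ∪ (Finset.Icc a' b').biUnion (F M))).card :=
            Finset.card_le_card hsub
        _ ≤ (Finset.Icc a b).card
            + ((Finset.range (M+2)) ∪ (Finset.Icc a' b').biUnion (F M)).card :=
            Finset.card_union_le _ _
        _ ≤ (b - a + 1) + ((M+2) + (2*M+4) * D) := by
            have := Nat.card_Icc a b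
            omega
        _ ≤ (M+2) + (2*M+4) * (D+1) := by
            have h : (2*M+4)*(D+1) = (2*M+4)*D + 2*M+4 := by ring
            omega

/-- There is a constant `C > 0` such that `|F(k,M)| ≤ C · M · log k` for every positive
integer `M` and every integer `k ≥ 2` (natural logarithm). -/
theorem F_card_le : ∃ C : ℝ, 0 < C ∧ ∀ M k : ℕ, 0 < M → 2 ≤ k →
    ((F M k).card : ℝ) ≤ C * M * Real.log k := by
  refine ⟨100, by norm_num, ?_⟩
  intro M k hM hk
  set L := Nat.log 2 k with hL
  have hkL : k < 2 ^ (L + 1) := Nat.lt_pow_succ_log_self (by norm_num) k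
  have hcard : (F M k).card ≤ (M+2) + (2*M+4) * (L+1) := by
    have hsub : F M k ⊆ (Finset.range (M+2)) ∪ (Finset.Icc k k).biUnion (F M) := by
      intro x hx
      simp only [Finset.mem_union, Finset.mem_biUnion, Finset.mem_Icc]
      exact Or.inr ⟨k, ⟨le_refl k, le_refl k⟩, hx⟩
    calc (F M k).card ≤ _ := Finset.card_le_card hsub
      _ ≤ _ := F_key M (L+1) k k (le_refl k) (by omega) (by omega)
  -- real estimates
  have hk1 : (1:ℝ) ≤ k := by exact_mod_cast Nat.one_le_of_lt hk
  have hlog2 : (0.6:ℝ) < Real.log 2 := by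
    have := Real.log_two_gt_d9; linarith
  have hlogk : Real.log 2 ≤ Real.log k := by
    apply Real.log_le_log (by norm_num)
    exact_mod_cast hk
  have hpow : (2:ℕ)^L ≤ k := Nat.pow_log_le_self 2 (by omega)
  have hLlog : (L:ℝ) * Real.log 2 ≤ Real.log k := by
    have h1 : ((2:ℝ))^(L:ℕ) ≤ (k:ℝ) := by exact_mod_cast hpow
    have h2 : Real.log ((2:ℝ)^(L:ℕ)) ≤ Real.log k :=
      Real.log_le_log (by positivity) h1
    rwa [Real.log_pow] at h2
  have hMr : (1:ℝ) ≤ (M:ℝ) := by exact_mod_cast hM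
  have hcard' : ((F M k).card : ℝ) ≤ ((M:ℝ)+2) + (2*(M:ℝ)+4) * ((L:ℝ)+1) := by
    have h : ((F M k).card : ℝ) ≤ (((M+2) + (2*M+4)*(L+1) : ℕ) : ℝ) :=
      Nat.cast_le.mpr hcard
    push_cast at h
    linarith
  have hlogk06 : (0.6:ℝ) ≤ Real.log k := le_trans (le_of_lt hlog2) hlogk
  have hLpos : (0:ℝ) ≤ (L:ℝ) := Nat.cast_nonneg _
  have hL06 : (L:ℝ) * 0.6 ≤ Real.log k := by nlinarith
  have hMpos : (0:ℝ) ≤ (M:ℝ) := Nat.cast_nonneg _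
  have hkey : (M:ℝ) * ((L:ℝ) * 0.6) ≤ (M:ℝ) * Real.log k :=
    mul_le_mul_of_nonneg_left hL06 hMpos
  have hkey2 : (M:ℝ) * 0.6 ≤ (M:ℝ) * Real.log k :=
    mul_le_mul_of_nonneg_left hlogk06 hMpos
  nlinarith [mul_nonneg hMpos hLpos]
end
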